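/- Let (α,μ) ∈ D_M^↑ × D_ℝ^↑ and suppose (ξ,β,ι) ∈ D_M × D_M^↑ × D_ℝ^↑ solves the MVSP for (α,μ). Then (t ↦ ξ_t[0,∞), ι) = Γ[t ↦ α_t[0,∞) − μ(t)], and for every x ∈ [0,∞), (t ↦ ξ_t[0,x], t ↦ β_t((x,∞))) = Γ[t ↦ α_t[0,x] − μ(t) + ι(t)]. -/

import Mathlib

/-! Both identities are instances of the uniqueness for the Skorokhod problem on the half-line:
if `φ = ψ + η ≥ 0` on `[0,∞)`, `η` is nonnegative, nondecreasing and right-continuous, and `dη`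
does not charge `{φ ≠ 0}`, then `η(t) = -inf_{[0,t]} (ψ ∧ 0)`. The bound `≥` holds because
`ψ ≥ -η`; for `≤`, if `φ` vanished on `[0,t]` only where `η ≤ c < η(t)`, then
`η(t) = dη[0,t] ≤ dη{φ ≠ 0} + c = c`.

For the level `x` one takes `φ = ξ[0,x]`, `η = β(x,∞)`; here `η` is monotone and right-continuous
because the order of `D_M^↑` (tested against bounded continuous functions) is, by inner regularity
with respect to closed sets, the setwise order of measures. For the total mass one lets `x → ∞`
in the first MVSP equation. -/

open MeasureTheory Filter Set
open scoped NNReal ENNReal BoundedContinuousFunction Topology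

noncomputable section

/-- Càdlàg on `[0,∞)`: right-continuous at every `t ≥ 0`, with left limits at
every `t > 0` (along `[0,t)`). -/
def CadlagOn {E : Type*} [TopologicalSpace E] (f : ℝ → E) : Prop :=
  (∀ t : ℝ, 0 ≤ t → ContinuousWithinAt f (Set.Ici t) t) ∧
  (∀ t : ℝ, 0 < t → ∃ l : E, Filter.Tendsto f (nhdsWithin t (Set.Ico 0 t)) (nhds l))

/-- `D_ℝ`: real-valued càdlàg paths on `[0,∞)`. -/
def DR (f : ℝ → ℝ) : Prop := CadlagOn f

/-- `D_ℝ^↑`: nonnegative nondecreasing real-valued càdlàg paths on `[0,∞)`. -/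
def DRup (f : ℝ → ℝ) : Prop :=
  CadlagOn f ∧ (∀ t : ℝ, 0 ≤ t → 0 ≤ f t) ∧ MonotoneOn f (Set.Ici 0)

/-- `D_M`: càdlàg paths with values in the space of finite nonnegative measures
on `[0,∞)`, equipped with the topology of weak convergence. -/
def DM (ζ : ℝ → FiniteMeasure ℝ≥0) : Prop := CadlagOn ζ

/-- `D_M^↑`: paths in `D_M` such that `t ↦ ∫ f dζ_t` is nondecreasing for every
nonnegative bounded continuous `f` on `[0,∞)`. -/
def DMup (ζ : ℝ → FiniteMeasure ℝ≥0) : Prop :=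
  CadlagOn ζ ∧
  ∀ f : ℝ≥0 →ᵇ ℝ≥0, MonotoneOn (fun t => (ζ t).testAgainstNN f) (Set.Ici 0)

/-- First component of the Skorokhod map on the half-line:
`Γ₁[ψ](t) = ψ(t) − inf_{s∈[0,t]} (ψ(s) ∧ 0)`. -/
def Gamma1 (ψ : ℝ → ℝ) (t : ℝ) : ℝ :=
  ψ t - sInf ((fun s => min (ψ s) 0) '' Set.Icc 0 t)

/-- Second component of the Skorokhod map on the half-line: `Γ₂[ψ] = Γ₁[ψ] − ψ`. -/
def Gamma2 (ψ : ℝ → ℝ) (t : ℝ) : ℝ := Gamma1 ψ t - ψ t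

/-- Extension of `g : [0,∞) → ℝ` by `0` on `(-∞,0)`. -/
def lsExt (g : ℝ → ℝ) : ℝ → ℝ := fun t => if t < 0 then 0 else g t

/- The Lebesgue–Stieltjes measure `m^g(B) = g(0)δ₀(B) + ∫_{(0,∞)} 1_B dg` of a
nonnegative nondecreasing right-continuous `g` on `[0,∞)`, realized as the
Stieltjes measure of the extension of `g` by `0` on `(-∞,0)`. -/
open scoped Classical in
def lsMeasure (g : ℝ → ℝ) : Measure ℝ :=
  if h : Monotone (lsExt g) ∧ ∀ t, ContinuousWithinAt (lsExt g) (Set.Ici t) t then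
    StieltjesFunction.measure ⟨lsExt g, h.1, h.2⟩
  else 0

/-- The measure-valued Skorokhod problem (MVSP): `(ξ,β,ι)` solves the MVSP for
the data `(α,μ)`. -/
def SolvesMVSP (α : ℝ → FiniteMeasure ℝ≥0) (μ : ℝ → ℝ)
    (ξ β : ℝ → FiniteMeasure ℝ≥0) (ι : ℝ → ℝ) : Prop :=
  (∀ x : ℝ≥0, ∀ t : ℝ, 0 ≤ t →
    (ξ t (Set.Iic x) : ℝ) = (α t (Set.Iic x) : ℝ) - μ t + (β t (Set.Ioi x) : ℝ) + ι t) ∧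
  (∀ x : ℝ≥0, ∀ᵐ t ∂(lsMeasure (fun s => (β s (Set.Ioi x) : ℝ))), (ξ t (Set.Iic x) : ℝ) = 0) ∧
  (∀ x : ℝ≥0, ∀ᵐ t ∂(lsMeasure ι), (ξ t (Set.Iic x) : ℝ) = 0) ∧
  (∀ t : ℝ, 0 ≤ t → (β t Set.univ : ℝ) + ι t = μ t)

/-- System (30): `(ξ,β,ι)` solves the MVSP for `(α, μ+ρ)` and `ξ_t[0,t) = 0`
for every `t > 0`. -/
def Solves30 (α : ℝ → FiniteMeasure ℝ≥0) (μ : ℝ → ℝ)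
    (ξ β : ℝ → FiniteMeasure ℝ≥0) (ι ρ : ℝ → ℝ) : Prop :=
  SolvesMVSP α (fun t => μ t + ρ t) ξ β ι ∧
  ∀ t : ℝ, 0 < t → (ξ t (Set.Iio (Real.toNNReal t)) : ℝ) = 0

/-- A minimal solution of system (30): a solution (lying in the appropriate
path spaces) whose reneging function `ρ` is pointwise below that of any other
solution. -/
def IsMinimalSol30 (α : ℝ → FiniteMeasure ℝ≥0) (μ : ℝ → ℝ)
    (ξ β : ℝ → FiniteMeasure ℝ≥0) (ι ρ : ℝ → ℝ) : Prop :=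
  (DM ξ ∧ DMup β ∧ DRup ι ∧ DRup ρ ∧ Solves30 α μ ξ β ι ρ) ∧
  ∀ (ξ' β' : ℝ → FiniteMeasure ℝ≥0) (ι' ρ' : ℝ → ℝ),
    DM ξ' → DMup β' → DRup ι' → DRup ρ' → Solves30 α μ ξ' β' ι' ρ' →
    ∀ t : ℝ, 0 ≤ t → ρ t ≤ ρ' t

/-- The (topological) support of a finite measure on `[0,∞)`: the set of points
all of whose open neighborhoods have positive measure. -/
def measSupport (ν : FiniteMeasure ℝ≥0) : Set ℝ≥0 :=
  {x : ℝ≥0 | ∀ u : Set ℝ≥0, IsOpen u → x ∈ u → ν u ≠ 0}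

/-- `σ(ν) = inf supp[ν]`, with value `∞` when `ν = 0`. -/
def sigmaOf (ν : FiniteMeasure ℝ≥0) : ℝ≥0∞ :=
  sInf ((fun x : ℝ≥0 => (x : ℝ≥0∞)) '' measSupport ν)

/-- Assumption A on the data `(α,μ)`. -/
def AssumptionA (α : ℝ → FiniteMeasure ℝ≥0) (μ : ℝ → ℝ) : Prop :=
  (∃ (ξ0 : FiniteMeasure ℝ≥0) (a0 : ℝ → FiniteMeasure ℝ≥0)
      (lam : ℝ → ℝ) (ν : FiniteMeasure ℝ≥0),
    (∀ x : ℝ≥0, ξ0 {x} = 0) ∧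
    ContinuousOn a0 (Set.Ici 0) ∧ DMup a0 ∧
    (∀ t : ℝ, 0 ≤ t → ∀ x : ℝ≥0, a0 t {x} = 0) ∧
    Measurable lam ∧ (∀ s : ℝ, 0 ≤ s → 0 ≤ lam s) ∧
    (∀ t : ℝ, 0 ≤ t → α t = a0 t + ξ0) ∧
    (∀ t : ℝ, 0 ≤ t → ∀ x : ℝ≥0, (a0 t (Set.Iic x) : ℝ) =
      ∫ s in Set.Icc (0:ℝ) t,
        (if s ≤ (x:ℝ) then lam s * (ν (Set.Iic (Real.toNNReal ((x:ℝ) - s))) : ℝ) else 0)) ∧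
    (∀ t : ℝ, 0 ≤ t →
      Filter.Tendsto (fun x : ℝ≥0 =>
          sSup ((fun s => lam s * (ν (Set.Iic x) : ℝ)) '' Set.Icc (0:ℝ) t))
        (nhdsWithin 0 (Set.Ioi 0)) (nhds 0))) ∧
  (∃ μ0 m : ℝ → ℝ,
    ContinuousOn μ0 (Set.Ici 0) ∧ (∀ t : ℝ, 0 ≤ t → 0 ≤ μ0 t) ∧
    MonotoneOn μ0 (Set.Ici 0) ∧
    Measurable m ∧ (∀ s : ℝ, 0 ≤ s → 0 ≤ m s) ∧
    (∀ t : ℝ, 0 ≤ t → MeasureTheory.IntegrableOn m (Set.Icc 0 t)) ∧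
    (∀ t : ℝ, 0 ≤ t → 0 < sInf (m '' Set.Icc (0:ℝ) t)) ∧
    (∀ t : ℝ, 0 ≤ t → μ t = μ0 t + ∫ s in Set.Icc (0:ℝ) t, m s))

section Stieltjes

lemma StieltjesFunction.measure_le_ofReal_of_forall_le (f : StieltjesFunction ℝ)
    (hf : Tendsto f atBot (𝓝 0)) {A : Set ℝ} (hA : BddAbove A) {c : ℝ}
    (hc : ∀ a ∈ A, f a ≤ c) : f.measure A ≤ ENNReal.ofReal c := by
  rcases A.eq_empty_or_nonempty with rfl | hne
  · simp
  by_cases hmem : sSup A ∈ A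
  · calc f.measure A ≤ f.measure (Iic (sSup A)) := measure_mono fun a ha => le_csSup hA ha
      _ = ENNReal.ofReal (f (sSup A)) := by rw [f.measure_Iic hf, sub_zero]
      _ ≤ ENNReal.ofReal c := ENNReal.ofReal_le_ofReal (hc _ hmem)
  · have hsub : A ⊆ Iio (sSup A) := fun a ha =>
      (le_csSup hA ha).lt_of_ne fun h => hmem (h ▸ ha)
    have hleft : Function.leftLim f (sSup A) ≤ c := by
      refine le_of_tendsto (f.mono.tendsto_leftLim _) (eventually_nhdsWithin_of_forall ?_)
      intro u (hu : u < sSup A)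
      obtain ⟨a, ha, hua⟩ := exists_lt_of_lt_csSup hne hu
      exact (f.mono hua.le).trans (hc a ha)
    calc f.measure A ≤ f.measure (Iio (sSup A)) := measure_mono hsub
      _ = ENNReal.ofReal (Function.leftLim f (sSup A)) := by rw [f.measure_Iio hf, sub_zero]
      _ ≤ ENNReal.ofReal c := ENNReal.ofReal_le_ofReal hleft

variable {g : ℝ → ℝ}

lemma lsExt_of_nonneg {t : ℝ} (ht : 0 ≤ t) : lsExt g t = g t := if_neg ht.not_gt

lemma monotone_lsExt (h0 : ∀ t, 0 ≤ t → 0 ≤ g t) (hmono : MonotoneOn g (Ici 0)) :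
    Monotone (lsExt g) := by
  intro a b hab
  unfold lsExt
  split_ifs with ha hb hb
  · exact le_rfl
  · exact h0 b (not_lt.mp hb)
  · exact absurd (hab.trans_lt hb) ha
  · exact hmono (not_lt.mp ha) (not_lt.mp hb) hab

lemma continuousWithinAt_lsExt (hrc : ∀ t, 0 ≤ t → ContinuousWithinAt g (Ici t) t) (t : ℝ) :
    ContinuousWithinAt (lsExt g) (Ici t) t := by
  rcases lt_or_ge t 0 with ht | ht
  · refine (ContinuousAt.congr (continuousAt_const : ContinuousAt (fun _ => (0 : ℝ)) t) ?_)
      |>.continuousWithinAt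
    filter_upwards [Iio_mem_nhds ht] with y (hy : y < 0)
    simp [lsExt, hy]
  · exact (hrc t ht).congr (fun y hy => lsExt_of_nonneg (ht.trans hy)) (lsExt_of_nonneg ht)

def lsStieltjes (g : ℝ → ℝ) (h0 : ∀ t, 0 ≤ t → 0 ≤ g t) (hmono : MonotoneOn g (Ici 0))
    (hrc : ∀ t, 0 ≤ t → ContinuousWithinAt g (Ici t) t) : StieltjesFunction ℝ :=
  ⟨lsExt g, monotone_lsExt h0 hmono, continuousWithinAt_lsExt hrc⟩

variable (h0 : ∀ t, 0 ≤ t → 0 ≤ g t) (hmono : MonotoneOn g (Ici 0))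
  (hrc : ∀ t, 0 ≤ t → ContinuousWithinAt g (Ici t) t)

lemma lsMeasure_eq_measure_lsStieltjes : lsMeasure g = (lsStieltjes g h0 hmono hrc).measure := by
  classical
  exact dif_pos ⟨monotone_lsExt h0 hmono, continuousWithinAt_lsExt hrc⟩

lemma tendsto_lsStieltjes_atBot : Tendsto (lsStieltjes g h0 hmono hrc) atBot (𝓝 0) := by
  refine tendsto_const_nhds.congr' ?_
  filter_upwards [eventually_lt_atBot 0] with y hy
  exact (if_pos hy).symm

end Stieltjes

/-- `(φ, η)` solves the Skorokhod problem on the half-line for `ψ`. -/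
structure IsSkorokhodSolution (ψ φ η : ℝ → ℝ) : Prop where
  eq_add : ∀ t, 0 ≤ t → φ t = ψ t + η t
  nonneg : ∀ t, 0 ≤ t → 0 ≤ φ t
  regulator_nonneg : ∀ t, 0 ≤ t → 0 ≤ η t
  regulator_monotoneOn : MonotoneOn η (Ici 0)
  regulator_rightCont : ∀ t, 0 ≤ t → ContinuousWithinAt η (Ici t) t
  ae_eq_zero : ∀ᵐ s ∂lsMeasure η, φ s = 0

namespace IsSkorokhodSolution

variable {ψ φ η : ℝ → ℝ} (h : IsSkorokhodSolution ψ φ η) {t : ℝ}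
include h

lemma neg_le_min {s : ℝ} (hs : 0 ≤ s) (hst : s ≤ t) : -η t ≤ min (ψ s) 0 := by
  have hηs := h.regulator_monotoneOn hs (hs.trans hst) hst
  have := h.eq_add s hs
  have := h.nonneg s hs
  have := h.regulator_nonneg s hs
  exact le_min (by linarith) (by linarith)

lemma exists_eq_zero_lt {c : ℝ} (ht : 0 ≤ t) (hc0 : 0 ≤ c) (hc : c < η t) :
    ∃ s ∈ Icc 0 t, φ s = 0 ∧ c < η s := by
  by_contra! hcon
  set f := lsStieltjes η h.regulator_nonneg h.regulator_monotoneOn h.regulator_rightCont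
  have hf := tendsto_lsStieltjes_atBot h.regulator_nonneg h.regulator_monotoneOn
    h.regulator_rightCont
  have hnull : f.measure {s | φ s ≠ 0} = 0 := by
    rw [← lsMeasure_eq_measure_lsStieltjes]
    exact ae_iff.mp h.ae_eq_zero
  have hcover : Iic t ⊆ {s | φ s ≠ 0} ∪ {s | s ≤ t ∧ f s ≤ c} := by
    intro s (hst : s ≤ t)
    by_cases hφ : φ s = 0
    · refine Or.inr ⟨hst, ?_⟩
      rcases lt_or_ge s 0 with hs | hs
      · exact (if_pos hs).trans_le hc0
      · exact (lsExt_of_nonneg hs).trans_le (hcon s ⟨hs, hst⟩ hφ)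
    · exact Or.inl hφ
  have hle : ENNReal.ofReal (η t) ≤ ENNReal.ofReal c :=
    calc ENNReal.ofReal (η t) = f.measure (Iic t) := by
          rw [f.measure_Iic hf, sub_zero]
          exact congrArg ENNReal.ofReal (lsExt_of_nonneg ht).symm
      _ ≤ f.measure {s | φ s ≠ 0} + f.measure {s | s ≤ t ∧ f s ≤ c} :=
          (measure_mono hcover).trans (measure_union_le _ _)
      _ ≤ ENNReal.ofReal c := by
          rw [hnull, zero_add]
          exact f.measure_le_ofReal_of_forall_le hf ⟨t, fun _ hs => hs.1⟩ fun _ hs => hs.2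
  exact hc.not_ge ((ENNReal.ofReal_le_ofReal_iff hc0).mp hle)

lemma sInf_min_eq (ht : 0 ≤ t) : sInf ((fun s => min (ψ s) 0) '' Icc 0 t) = -η t := by
  have hmem : ∀ s ∈ Icc 0 t, min (ψ s) 0 ∈ (fun s => min (ψ s) 0) '' Icc 0 t :=
    fun s hs => mem_image_of_mem _ hs
  have hbdd : BddBelow ((fun s => min (ψ s) 0) '' Icc 0 t) := by
    refine ⟨-η t, ?_⟩
    rintro _ ⟨s, hs, rfl⟩
    exact h.neg_le_min hs.1 hs.2
  refine le_antisymm (le_of_forall_pos_le_add fun ε hε => ?_) ?_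
  · rcases le_or_gt (η t) ε with hηε | hεη
    · calc _ ≤ min (ψ 0) 0 := csInf_le hbdd (hmem 0 ⟨le_rfl, ht⟩)
        _ ≤ -η t + ε := (min_le_right _ _).trans (by linarith)
    · obtain ⟨s, hs, hφs, hηs⟩ := h.exists_eq_zero_lt ht (by linarith) (sub_lt_self _ hε)
      have := h.eq_add s hs.1
      calc _ ≤ min (ψ s) 0 := csInf_le hbdd (hmem s hs)
        _ ≤ -η t + ε := (min_le_left _ _).trans (by linarith)
  · refine le_csInf ⟨_, hmem 0 ⟨le_rfl, ht⟩⟩ ?_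
    rintro _ ⟨s, hs, rfl⟩
    exact h.neg_le_min hs.1 hs.2

lemma eq_Gamma (ht : 0 ≤ t) : φ t = Gamma1 ψ t ∧ η t = Gamma2 ψ t := by
  have := h.eq_add t ht
  unfold Gamma2 Gamma1
  rw [h.sInf_min_eq ht]
  constructor <;> linarith

end IsSkorokhodSolution

namespace MeasureTheory.FiniteMeasure

section Order

variable {X : Type*} [MeasurableSpace X] {ν ν' : FiniteMeasure X}

lemma toMeasure_apply_le_of_isClosed [TopologicalSpace X] [HasOuterApproxClosed X]
    [OpensMeasurableSpace X]
    (h : ∀ f : X →ᵇ ℝ≥0, ν.testAgainstNN f ≤ ν'.testAgainstNN f) {F : Set X} (hF : IsClosed F) :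
    (ν : Measure X) F ≤ (ν' : Measure X) F :=
  le_of_tendsto_of_tendsto' (HasOuterApproxClosed.tendsto_lintegral_apprSeq hF ν)
    (HasOuterApproxClosed.tendsto_lintegral_apprSeq hF ν') fun n => by
      simpa only [testAgainstNN_coe_eq] using ENNReal.coe_le_coe.mpr (h (hF.apprSeq n))

lemma toMeasure_le_of_forall_testAgainstNN_le [TopologicalSpace X]
    [TopologicalSpace.PseudoMetrizableSpace X] [BorelSpace X] (h : ∀ f : X →ᵇ ℝ≥0, ν.testAgainstNN f ≤ ν'.testAgainstNN f) :
    (ν : Measure X) ≤ ν' := by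
  refine Measure.le_iff.mpr fun A hA => ?_
  rw [hA.measure_eq_iSup_isClosed_of_ne_top (measure_ne_top _ _),
    hA.measure_eq_iSup_isClosed_of_ne_top (measure_ne_top _ _)]
  exact iSup₂_mono fun F _ => iSup_mono fun hF => toMeasure_apply_le_of_isClosed h hF

lemma coeFn_le_of_toMeasure_le (hle : (ν : Measure X) ≤ ν') (A : Set X) :
    (ν A : ℝ) ≤ ν' A :=
  ENNReal.toReal_mono (measure_ne_top _ _) (hle A)

lemma coeFn_sub_coeFn_le_mass_sub_mass (hle : (ν : Measure X) ≤ ν') {A : Set X}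
    (hA : MeasurableSet A) : (ν' A : ℝ) - ν A ≤ ν'.mass - ν.mass := by
  have hν := measureReal_add_measureReal_compl (μ := (ν : Measure X)) hA
  have hν' := measureReal_add_measureReal_compl (μ := (ν' : Measure X)) hA
  have hc := coeFn_le_of_toMeasure_le hle Aᶜ
  simp only [measureReal_eq_coe_coeFn] at hν hν'
  change _ ≤ (ν' univ : ℝ) - ν univ
  linarith

end Order

lemma tendsto_coeFn_Iic_atTop (ν : FiniteMeasure ℝ≥0) :
    Tendsto (fun x => (ν (Iic x) : ℝ)) atTop (𝓝 (ν univ)) :=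
  (ENNReal.tendsto_toReal (measure_ne_top _ _)).comp (tendsto_measure_Iic_atTop _)

lemma tendsto_coeFn_Ioi_atTop (ν : FiniteMeasure ℝ≥0) :
    Tendsto (fun x => (ν (Ioi x) : ℝ)) atTop (𝓝 0) := by
  have hcompl (x : ℝ≥0) : (ν (Ioi x) : ℝ) = ν univ - ν (Iic x) := by
    rw [← compl_Iic]
    exact measureReal_compl measurableSet_Iic
  simpa only [hcompl, sub_self] using (tendsto_coeFn_Iic_atTop ν).const_sub (ν univ : ℝ)

end MeasureTheory.FiniteMeasure

namespace DMup

open FiniteMeasure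

variable {ζ : ℝ → FiniteMeasure ℝ≥0} (hζ : DMup ζ)
include hζ

lemma toMeasure_mono {a b : ℝ} (ha : 0 ≤ a) (hab : a ≤ b) : (ζ a : Measure ℝ≥0) ≤ ζ b :=
  toMeasure_le_of_forall_testAgainstNN_le fun f => hζ.2 f ha (ha.trans hab) hab

lemma monotoneOn_coeFn (A : Set ℝ≥0) : MonotoneOn (fun s => (ζ s A : ℝ)) (Ici 0) :=
  fun _ ha _ _ hab => coeFn_le_of_toMeasure_le (hζ.toMeasure_mono ha hab) A

/-- Monotonicity bounds the increment of `ζ · A` by that of the total mass, which is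
right-continuous. -/
lemma continuousWithinAt_coeFn {A : Set ℝ≥0} (hA : MeasurableSet A) {t : ℝ} (ht : 0 ≤ t) :
    ContinuousWithinAt (fun s => (ζ s A : ℝ)) (Ici t) t := by
  have hmass : Tendsto (fun s => (ζ t A : ℝ) + ((ζ s).mass - (ζ t).mass)) (𝓝[≥] t)
      (𝓝 ((ζ t A : ℝ) + ((ζ t).mass - (ζ t).mass))) := by
    refine tendsto_const_nhds.add (Tendsto.sub_const ?_ _)
    exact NNReal.tendsto_coe.mpr (hζ.1.1 t ht).mass
  refine tendsto_of_tendsto_of_tendsto_of_le_of_le' tendsto_const_nhds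
    (by simpa only [sub_self, add_zero] using hmass) ?_ ?_
  all_goals filter_upwards [self_mem_nhdsWithin] with s (hs : t ≤ s)
  · exact hζ.monotoneOn_coeFn A ht (ht.trans hs) hs
  · have := coeFn_sub_coeFn_le_mass_sub_mass (hζ.toMeasure_mono ht hs) hA
    linarith

end DMup

namespace SolvesMVSP

open FiniteMeasure

variable {α ξ β : ℝ → FiniteMeasure ℝ≥0} {μ ι : ℝ → ℝ} (hsol : SolvesMVSP α μ ξ β ι)
include hsol

lemma isSkorokhodSolution_Iic (hβ : DMup β) (x : ℝ≥0) :
    IsSkorokhodSolution (fun s => (α s (Iic x) : ℝ) - μ s + ι s) (fun s => (ξ s (Iic x) : ℝ))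
      (fun s => (β s (Ioi x) : ℝ)) where
  eq_add t ht := by rw [hsol.1 x t ht]; ring
  nonneg _ _ := NNReal.coe_nonneg _
  regulator_nonneg _ _ := NNReal.coe_nonneg _
  regulator_monotoneOn := hβ.monotoneOn_coeFn _
  regulator_rightCont _ ht := hβ.continuousWithinAt_coeFn measurableSet_Ioi ht
  ae_eq_zero := hsol.2.1 x

lemma coeFn_univ_eq {t : ℝ} (ht : 0 ≤ t) : (ξ t univ : ℝ) = (α t univ : ℝ) - μ t + ι t := by
  have hlim : Tendsto (fun x => (ξ t (Iic x) : ℝ)) atTop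
      (𝓝 ((α t univ : ℝ) - μ t + 0 + ι t)) :=
    ((((tendsto_coeFn_Iic_atTop (α t)).sub_const (μ t)).add
      (tendsto_coeFn_Ioi_atTop (β t))).add_const (ι t)).congr fun x => (hsol.1 x t ht).symm
  rw [tendsto_nhds_unique (tendsto_coeFn_Iic_atTop (ξ t)) hlim, add_zero]

lemma ae_coeFn_univ_eq_zero : ∀ᵐ s ∂lsMeasure ι, (ξ s univ : ℝ) = 0 := by
  filter_upwards [ae_all_iff.mpr fun n : ℕ => hsol.2.2.1 n] with s hs
  refine tendsto_nhds_unique ((tendsto_coeFn_Iic_atTop (ξ s)).comp tendsto_natCast_atTop_atTop) ?_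
  simpa only [Function.comp_def, hs] using tendsto_const_nhds

lemma isSkorokhodSolution_univ (hι : DRup ι) :
    IsSkorokhodSolution (fun s => (α s univ : ℝ) - μ s) (fun s => (ξ s univ : ℝ)) ι where
  eq_add _ ht := hsol.coeFn_univ_eq ht
  nonneg _ _ := NNReal.coe_nonneg _
  regulator_nonneg := hι.2.1
  regulator_monotoneOn := hι.2.2
  regulator_rightCont := hι.1.1
  ae_eq_zero := hsol.ae_coeFn_univ_eq_zero

end SolvesMVSP

theorem mvsp_skorokhod_identities_general
    (α ξ β : ℝ → FiniteMeasure ℝ≥0) (μ ι : ℝ → ℝ)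
    (hβ : DMup β) (hι : DRup ι)
    (hsol : SolvesMVSP α μ ξ β ι) :
    (∀ t : ℝ, 0 ≤ t →
      (ξ t Set.univ : ℝ) = Gamma1 (fun s => (α s Set.univ : ℝ) - μ s) t ∧
      ι t = Gamma2 (fun s => (α s Set.univ : ℝ) - μ s) t) ∧
    (∀ x : ℝ≥0, ∀ t : ℝ, 0 ≤ t →
      (ξ t (Set.Iic x) : ℝ) = Gamma1 (fun s => (α s (Set.Iic x) : ℝ) - μ s + ι s) t ∧
      (β t (Set.Ioi x) : ℝ) = Gamma2 (fun s => (α s (Set.Iic x) : ℝ) - μ s + ι s) t) :=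
  ⟨fun _ ht => (hsol.isSkorokhodSolution_univ hι).eq_Gamma ht,
    fun x _ ht => (hsol.isSkorokhodSolution_Iic hβ x).eq_Gamma ht⟩

/-- Further Skorokhod-map identities satisfied by any solution of the MVSP:
`(ξ[0,∞), ι) = Γ[α[0,∞) − μ]` and
`(ξ[0,x], β((x,∞))) = Γ[α[0,x] − μ + ι]` for every `x ≥ 0`. -/
theorem mvsp_skorokhod_identities
    (α ξ β : ℝ → FiniteMeasure ℝ≥0) (μ ι : ℝ → ℝ)
    (hα : DMup α) (hμ : DRup μ) (hξ : DM ξ) (hβ : DMup β) (hι : DRup ι)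
    (hsol : SolvesMVSP α μ ξ β ι) :
    (∀ t : ℝ, 0 ≤ t →
      (ξ t Set.univ : ℝ) = Gamma1 (fun s => (α s Set.univ : ℝ) - μ s) t ∧
      ι t = Gamma2 (fun s => (α s Set.univ : ℝ) - μ s) t) ∧
    (∀ x : ℝ≥0, ∀ t : ℝ, 0 ≤ t →
      (ξ t (Set.Iic x) : ℝ) = Gamma1 (fun s => (α s (Set.Iic x) : ℝ) - μ s + ι s) t ∧
      (β t (Set.Ioi x) : ℝ) = Gamma2 (fun s => (α s (Set.Iic x) : ℝ) - μ s + ι s) t) :=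
  mvsp_skorokhod_identities_general α ξ β μ ι hβ hι hsol

end
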